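/- Fix a prime q, an integer d ≥ 2, t = ⌈2·log_q d + 2⌉, and d distinct monic irreducible polynomials p_1, …, p_d of degree t over F = F_q. For any positive integer N and any canonical box B of volume q^{−s} with s ≤ N, the number of polynomials f ∈ F[x] of degree < N with r(f) ∈ B equals exactly q^{N−s}. -/

import Mathlib

open Finset Polynomial

/-- The value at `1/q` of a polynomial over `ZMod q`, with coefficients lifted to
`{0, 1, …, q−1} ⊆ ℝ`. -/
noncomputable def pev (q : ℕ) (g : Polynomial (ZMod q)) : ℝ :=
  ∑ j ∈ Finset.range (g.natDegree + 1), ((g.coeff j).val : ℝ) / (q : ℝ) ^ j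

/-- `r_p(f)`: writing `f = f₀ + f₁ p + f₂ p² + ⋯` in base `p` (each `fᵢ` of degree `< t`,
obtained as `(f /ₘ p^i) %ₘ p`), the real number
`(f₀(1/q) + f₁(1/q) q^(−t) + f₂(1/q) q^(−2t) + ⋯)/q`. -/
noncomputable def rp (q t : ℕ) (p f : Polynomial (ZMod q)) : ℝ :=
  (∑ i ∈ Finset.range (f.natDegree + 1), pev q ((f /ₘ p ^ i) %ₘ p) / (q : ℝ) ^ (i * t)) / q

/-- The map `r : F[x] → [0,1)^d`, `r(f) = (r_{p 1}(f), …, r_{p d}(f))`. -/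
noncomputable def rmap (q t d : ℕ) (p : Fin d → Polynomial (ZMod q))
    (f : Polynomial (ZMod q)) : Fin d → ℝ :=
  fun i => rp q t (p i) f

/-- The canonical box `∏ i, [a i / q^(t * k i), (a i + 1) / q^(t * k i))`. -/
def canonicalBox (q t d : ℕ) (k a : Fin d → ℕ) : Set (Fin d → ℝ) :=
  Set.univ.pi fun i =>
    Set.Ico ((a i : ℝ) / (q : ℝ) ^ (t * k i)) (((a i : ℝ) + 1) / (q : ℝ) ^ (t * k i))

/-- A basic box in base `q` in `[0,1]^d` of volume `q^(-n)`. -/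
def IsBasicBox (q d n : ℕ) (β : Set (Fin d → ℝ)) : Prop :=
  ∃ k a : Fin d → ℕ, (∀ i, a i + 1 ≤ q ^ k i) ∧ (∑ i, k i) = n ∧
    β = Set.univ.pi fun i =>
      Set.Ico ((a i : ℝ) / (q : ℝ) ^ k i) (((a i : ℝ) + 1) / (q : ℝ) ^ k i)

/-- A canonical box with parameter `t`, as a set. -/
def IsCanonicalBox (q t d : ℕ) (B : Set (Fin d → ℝ)) : Prop :=
  ∃ k a : Fin d → ℕ, (∀ i, a i + 1 ≤ q ^ (t * k i)) ∧ B = canonicalBox q t d k a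

/-- `(B, β)` is a good pair: `β` is a basic box of volume `q^(-n)` and `B` is the
smallest canonical box containing `β`. -/
def IsGoodPair (q t d n : ℕ) (B β : Set (Fin d → ℝ)) : Prop :=
  IsBasicBox q d n β ∧ IsCanonicalBox q t d B ∧ β ⊆ B ∧
    ∀ B' : Set (Fin d → ℝ), IsCanonicalBox q t d B' → β ⊆ B' → B ⊆ B'

/-- The polynomial obtained from `f` by setting the coefficients of
`x^0, x^1, …, x^(c-1)` to zero. -/
noncomputable def eraseLow (q : ℕ) (c : ℕ) (f : Polynomial (ZMod q)) : Polynomial (ZMod q) :=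
  ∑ j ∈ f.support.filter (fun j => c ≤ j), Polynomial.monomial j (f.coeff j)


/-!
The real number `r_p(f)` is the base-`q` numeral whose digits are the coefficients of the base-`p`
digits of `f`, each digit of `f` filling `t` places. So `r_p(f)` lies in
`[a / q^(t k), (a + 1) / q^(t k))` iff the first `k` base-`p` digits of `f` spell `a`, i.e. iff
`f ≡ g (mod p^k)` for the unique `g` of degree `< t k` whose digits spell `a`. The canonical box is
thus cut out by congruences modulo the pairwise coprime `p_i^(k_i)`; by the Chinese remainder
theorem these amount to one congruence modulo a monic polynomial of degree `s`, which exactly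
`q^(N - s)` polynomials of degree `< N` satisfy.
-/

section MostSignificantFirst

variable {b n : ℕ} {c c' : ℕ → ℕ}

lemma sum_mul_pow_sub_eq_finFunctionFinEquiv (hc : ∀ j < n, c j < b) :
    ∑ j ∈ range n, c j * b ^ (n - 1 - j) =
      finFunctionFinEquiv (fun j : Fin n => (⟨c (n - 1 - j), hc _ (by omega)⟩ : Fin b)) := by
  rw [finFunctionFinEquiv_apply, Fin.sum_univ_eq_sum_range (fun j => c (n - 1 - j) * b ^ j),
    ← sum_range_reflect]
  refine sum_congr rfl fun j hj => ?_
  rw [show n - 1 - (n - 1 - j) = j by rw [mem_range] at hj; omega]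

lemma sum_mul_pow_sub_lt (hc : ∀ j < n, c j < b) :
    ∑ j ∈ range n, c j * b ^ (n - 1 - j) < b ^ n := by
  rw [sum_mul_pow_sub_eq_finFunctionFinEquiv hc]
  exact Fin.is_lt _

lemma eq_of_sum_mul_pow_sub_eq (hc : ∀ j < n, c j < b) (hc' : ∀ j < n, c' j < b)
    (h : ∑ j ∈ range n, c j * b ^ (n - 1 - j) = ∑ j ∈ range n, c' j * b ^ (n - 1 - j))
    {j : ℕ} (hj : j < n) : c j = c' j := by
  rw [sum_mul_pow_sub_eq_finFunctionFinEquiv hc, sum_mul_pow_sub_eq_finFunctionFinEquiv hc'] at h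
  have := congrArg Fin.val
    (congrFun (finFunctionFinEquiv.injective (Fin.ext h)) ⟨n - 1 - j, by omega⟩)
  simpa [show n - 1 - (n - 1 - j) = j by omega] using this

end MostSignificantFirst

section BaseExpansion

variable {R : Type*} [CommRing R]

lemma degree_mul_add_lt_degree_mul [Nontrivial R] {a b r s : R[X]} (ha : a.Monic) (hb : b.Monic)
    (hr : r.degree < b.degree) (hs : s.degree < a.degree) :
    (a * r + s).degree < (a * b).degree := by
  have har : (a * r).degree < (a * b).degree := by
    rw [mul_comm a r, mul_comm a b, ha.degree_mul, ha.degree_mul]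
    exact WithBot.add_lt_add_right (by simp [ha.ne_zero]) hr
  have ha_le : a.degree ≤ (a * b).degree := by
    rw [mul_comm, ha.degree_mul]
    exact le_add_of_nonneg_left (zero_le_degree_iff.2 hb.ne_zero)
  exact (degree_add_le _ _).trans_lt (max_lt har (hs.trans_le ha_le))

lemma divByMonic_mul_eq {a b : R[X]} (ha : a.Monic) (hb : b.Monic) (f : R[X]) :
    f /ₘ (a * b) = f /ₘ a /ₘ b := by
  nontriviality R
  refine (div_modByMonic_unique _ (a * (f /ₘ a %ₘ b) + f %ₘ a) (ha.mul hb) ⟨?_, ?_⟩).1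
  · linear_combination modByMonic_add_div f a + a * modByMonic_add_div (f /ₘ a) b
  · exact degree_mul_add_lt_degree_mul ha hb (degree_modByMonic_lt _ hb)
      (degree_modByMonic_lt _ ha)

/-- The `i`-th coefficient of the base-`p` expansion `f = f₀ + f₁ p + f₂ p² + ⋯`, as in `rp`. -/
noncomputable def baseDigit (p f : R[X]) (i : ℕ) : R[X] :=
  f /ₘ p ^ i %ₘ p

variable {p : R[X]} (hp : p.Monic) (f : R[X])
include hp

lemma baseDigit_succ (i : ℕ) : baseDigit p f (i + 1) = baseDigit p (f /ₘ p) i := by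
  rw [baseDigit, baseDigit, pow_succ', divByMonic_mul_eq hp (hp.pow i)]

lemma degree_baseDigit_lt [Nontrivial R] (i : ℕ) : (baseDigit p f i).degree < p.natDegree :=
  degree_eq_natDegree hp.ne_zero ▸ degree_modByMonic_lt _ hp

lemma baseDigit_eq_zero [Nontrivial R] {i : ℕ} (hf : f.degree < (p ^ i).degree) :
    baseDigit p f i = 0 := by
  rw [baseDigit, (divByMonic_eq_zero_iff (hp.pow i)).2 hf, zero_modByMonic]

lemma baseDigit_modByMonic_pow {i k : ℕ} (hik : i < k) :
    baseDigit p (f %ₘ p ^ k) i = baseDigit p f i := by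
  nontriviality R
  have hdiv : f /ₘ p ^ i = p * (p ^ (k - i - 1) * (f /ₘ p ^ k)) + f %ₘ p ^ k /ₘ p ^ i := by
    refine (div_modByMonic_unique _ (f %ₘ p ^ k %ₘ p ^ i) (hp.pow i) ⟨?_, ?_⟩).1
    · have hpk : p ^ i * (p * p ^ (k - i - 1)) = p ^ k := by
        rw [← pow_succ', ← pow_add]; congr 1; omega
      linear_combination modByMonic_add_div f (p ^ k) + modByMonic_add_div (f %ₘ p ^ k) (p ^ i)
        + f /ₘ p ^ k * hpk
    · exact degree_modByMonic_lt _ (hp.pow i)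
  rw [baseDigit, baseDigit, hdiv, add_modByMonic, self_mul_modByMonic hp, zero_add]

lemma sum_baseDigit_mul_pow {k : ℕ} (hf : f.degree < (p ^ k).degree) :
    ∑ i ∈ range k, baseDigit p f i * p ^ i = f := by
  nontriviality R
  induction k generalizing f with
  | zero =>
    rw [pow_zero, degree_one, Nat.WithBot.lt_zero_iff, degree_eq_bot] at hf
    simp [hf]
  | succ k ih =>
    have hquot : (f /ₘ p).degree < (p ^ k).degree := by
      rw [← divByMonic_eq_zero_iff (hp.pow k), ← divByMonic_mul_eq hp (hp.pow k), ← pow_succ',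
        divByMonic_eq_zero_iff (hp.pow _)]
      exact hf
    rw [sum_range_succ', baseDigit, pow_zero, divByMonic_one, mul_one]
    simp_rw [baseDigit_succ hp, pow_succ', ← mul_assoc, mul_comm _ p, mul_assoc, ← mul_sum,
      ih _ hquot]
    exact (add_comm _ _).trans (modByMonic_add_div f p)

end BaseExpansion

section Counting

open Function

variable {R : Type*} [CommRing R]

lemma modByMonic_eq_modByMonic_iff {Q f u : R[X]} (hQ : Q.Monic) :
    f %ₘ Q = u %ₘ Q ↔ Q ∣ f - u := by
  rw [← sub_eq_zero, ← sub_modByMonic, modByMonic_eq_zero_iff_dvd hQ]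

lemma exists_forall_modByMonic_eq {ι : Type*} [Finite ι] {P g : ι → R[X]}
    (hP : ∀ i, (P i).Monic) (hcop : Pairwise (IsCoprime on P))
    (hg : ∀ i, (g i).degree < (P i).degree) : ∃ u : R[X], ∀ i, u %ₘ P i = g i := by
  nontriviality R
  obtain ⟨u, hu⟩ := Ideal.exists_forall_sub_mem_ideal (I := fun i => Ideal.span {P i})
    (fun i j hij => (Ideal.isCoprime_span_singleton_iff _ _).2 (hcop hij)) g
  refine ⟨u, fun i => ?_⟩
  rw [(modByMonic_eq_modByMonic_iff (hP i)).2 (Ideal.mem_span_singleton.1 (hu i)),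
    (modByMonic_eq_self_iff (hP i)).2 (hg i)]

lemma degree_mul_add_lt_iff [Nontrivial R] {P r h : R[X]} (hP : P.Monic)
    (hr : r.degree < P.degree) {N : ℕ} (hPN : P.natDegree ≤ N) :
    (P * h + r).degree < N ↔ h.degree < (N - P.natDegree : ℕ) := by
  rcases eq_or_ne h 0 with rfl | hh
  · simpa [degree_eq_natDegree hP.ne_zero] using hr.trans_le (by
      rw [degree_eq_natDegree hP.ne_zero]; exact_mod_cast hPN)
  have hPh : (P * h).degree = (P.natDegree + h.natDegree : ℕ) := by
    rw [degree_eq_natDegree (hP.mul_right_ne_zero hh), hP.natDegree_mul' hh]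
  rw [degree_add_eq_left_of_degree_lt (hr.trans_le ?_), hPh, degree_eq_natDegree hh]
  · norm_cast
    omega
  · rw [hPh, degree_eq_natDegree hP.ne_zero]
    exact_mod_cast Nat.le_add_right _ _

variable [Fintype R]

lemma ncard_setOf_degree_lt (n : ℕ) : {f : R[X] | f.degree < n}.ncard = Fintype.card R ^ n := by
  rw [← Nat.card_coe_set_eq, show {f : R[X] | f.degree < n} = degreeLT R n from
    Set.ext fun _ => mem_degreeLT.symm, SetLike.coe_sort_coe,
    Nat.card_congr (degreeLTEquiv R n).toEquiv, Nat.card_fun, Nat.card_eq_fintype_card,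
    Nat.card_fin]

lemma ncard_setOf_degree_lt_modByMonic_eq [Nontrivial R] {P r : R[X]} (hP : P.Monic)
    (hr : r.degree < P.degree) {N : ℕ} (hPN : P.natDegree ≤ N) :
    {f : R[X] | f.degree < N ∧ f %ₘ P = r}.ncard = Fintype.card R ^ (N - P.natDegree) := by
  have himage : {f : R[X] | f.degree < N ∧ f %ₘ P = r} =
      (fun h => P * h + r) '' {h | h.degree < (N - P.natDegree : ℕ)} := by
    ext f
    constructor
    · rintro ⟨hf, rfl⟩
      have hfP : P * (f /ₘ P) + f %ₘ P = f := by rw [add_comm]; exact modByMonic_add_div f P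
      exact ⟨f /ₘ P, (degree_mul_add_lt_iff hP hr hPN).1 (by rwa [hfP]), hfP⟩
    · rintro ⟨h, hh, rfl⟩
      refine ⟨(degree_mul_add_lt_iff hP hr hPN).2 hh, ?_⟩
      rw [add_modByMonic, self_mul_modByMonic hP, zero_add, (modByMonic_eq_self_iff hP).2 hr]
  rw [himage, Set.ncard_image_of_injective _ fun h h' e => hP.isRegular.left (add_right_cancel e),
    ncard_setOf_degree_lt]

theorem ncard_setOf_degree_lt_forall_modByMonic_eq [Nontrivial R] {ι : Type*} [Fintype ι]
    {P g : ι → R[X]} (hP : ∀ i, (P i).Monic) (hcop : Pairwise (IsCoprime on P))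
    (hg : ∀ i, (g i).degree < (P i).degree) {N : ℕ} (hN : ∑ i, (P i).natDegree ≤ N) :
    {f : R[X] | f.degree < N ∧ ∀ i, f %ₘ P i = g i}.ncard =
      Fintype.card R ^ (N - ∑ i, (P i).natDegree) := by
  obtain ⟨u, hu⟩ := exists_forall_modByMonic_eq hP hcop hg
  have hprod : (∏ i, P i).Monic := monic_prod_of_monic _ _ fun i _ => hP i
  have hdeg : (∏ i, P i).natDegree = ∑ i, (P i).natDegree :=
    natDegree_prod_of_monic _ _ fun i _ => hP i
  have hcrt : ∀ f : R[X], (∀ i, f %ₘ P i = g i) ↔ f %ₘ ∏ i, P i = u %ₘ ∏ i, P i := fun f => by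
    simp_rw [← hu, modByMonic_eq_modByMonic_iff (hP _), modByMonic_eq_modByMonic_iff hprod]
    exact ⟨fun h => prod_dvd_of_coprime (hcop.set_pairwise _) fun i _ => h i,
      fun h i => (dvd_prod_of_mem P (mem_univ i)).trans h⟩
  simp_rw [hcrt]
  rw [ncard_setOf_degree_lt_modByMonic_eq hprod (degree_modByMonic_lt _ hprod) (hdeg ▸ hN), hdeg]

lemma pairwise_isCoprime_pow {K ι : Type*} [Field K] {p : ι → K[X]} (hp : ∀ i, (p i).Monic)
    (hirr : ∀ i, Irreducible (p i)) (hinj : Injective p) (k : ι → ℕ) :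
    Pairwise (IsCoprime on fun i => p i ^ k i) := fun i j hij =>
  ((hirr i).coprime_iff_not_dvd.2 fun hdvd => hij (hinj (eq_of_monic_of_associated (hp i) (hp j)
    ((hirr i).associated_of_dvd (hirr j) hdvd)))).pow

end Counting

section Values

variable {q : ℕ} (t : ℕ)

/-- The constant coefficient is the most significant digit, so that
`pev q g = basicValue t g / q^(t-1)` when `deg g < t`. -/
noncomputable def basicValue (g : (ZMod q)[X]) : ℕ :=
  ∑ j ∈ range t, (g.coeff j).val * q ^ (t - 1 - j)

/-- Equals `⌊q^(t k) · r_p(f)⌋` (`floor_rp_mul_pow`). -/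
noncomputable def prefixValue (p f : (ZMod q)[X]) (k : ℕ) : ℕ :=
  ∑ i ∈ range k, basicValue t (baseDigit p f i) * (q ^ t) ^ (k - 1 - i)

variable {t}

lemma prefixValue_modByMonic_pow {p : (ZMod q)[X]} (hp : p.Monic) (f : (ZMod q)[X]) (k : ℕ) :
    prefixValue t p (f %ₘ p ^ k) k = prefixValue t p f k :=
  sum_congr rfl fun i hi => by rw [baseDigit_modByMonic_pow hp f (mem_range.1 hi)]

variable [Fact (1 < q)]

lemma basicValue_lt (g : (ZMod q)[X]) : basicValue t g < q ^ t :=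
  sum_mul_pow_sub_lt fun _ _ => ZMod.val_lt _

lemma eq_of_basicValue_eq {g g' : (ZMod q)[X]} (hg : g.degree < t) (hg' : g'.degree < t)
    (h : basicValue t g = basicValue t g') : g = g' := by
  ext j
  rcases lt_or_ge j t with hj | hj
  · exact ZMod.val_injective q
      (eq_of_sum_mul_pow_sub_eq (fun _ _ => ZMod.val_lt _) (fun _ _ => ZMod.val_lt _) h hj)
  · rw [coeff_eq_zero_of_degree_lt (hg.trans_le (by exact_mod_cast hj)),
      coeff_eq_zero_of_degree_lt (hg'.trans_le (by exact_mod_cast hj))]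

lemma prefixValue_lt (p f : (ZMod q)[X]) (k : ℕ) : prefixValue t p f k < q ^ (t * k) := by
  rw [pow_mul]
  exact sum_mul_pow_sub_lt fun _ _ => basicValue_lt _

lemma eq_of_prefixValue_eq {p : (ZMod q)[X]} (hp : p.Monic) (hpt : p.natDegree = t) {k : ℕ}
    {f g : (ZMod q)[X]} (hf : f.degree < (p ^ k).degree) (hg : g.degree < (p ^ k).degree)
    (h : prefixValue t p f k = prefixValue t p g k) : f = g := by
  have hdigit : ∀ (f : (ZMod q)[X]) i, (baseDigit p f i).degree < t :=
    fun f i => hpt ▸ degree_baseDigit_lt hp f i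
  rw [← sum_baseDigit_mul_pow hp f hf, ← sum_baseDigit_mul_pow hp g hg]
  refine sum_congr rfl fun i hi => ?_
  rw [eq_of_basicValue_eq (hdigit f i) (hdigit g i)
    (eq_of_sum_mul_pow_sub_eq (fun _ _ => basicValue_lt _) (fun _ _ => basicValue_lt _) h
      (mem_range.1 hi))]

lemma exists_prefixValue_eq {p : (ZMod q)[X]} (hp : p.Monic) (hpt : p.natDegree = t) {k a : ℕ}
    (ha : a < q ^ (t * k)) :
    ∃ g : (ZMod q)[X], g.degree < (p ^ k).degree ∧ prefixValue t p g k = a := by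
  have hdeg : (p ^ k).degree = (t * k : ℕ) := by
    rw [degree_eq_natDegree (hp.pow k).ne_zero, hp.natDegree_pow, hpt, mul_comm]
  have himage :
      (prefixValue t p · k) '' {g | g.degree < (p ^ k).degree} = Set.Iio (q ^ (t * k)) := by
    refine Set.eq_of_subset_of_ncard_le (Set.image_subset_iff.2 fun g _ => prefixValue_lt p g k)
      ?_ (Set.finite_Iio _)
    have hinj : Set.InjOn (prefixValue t p · k) {g | g.degree < (p ^ k).degree} :=
      fun f hf g hg => eq_of_prefixValue_eq hp hpt hf hg
    rw [Set.ncard_Iio_nat, hinj.ncard_image, hdeg, ncard_setOf_degree_lt, ZMod.card]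
  rwa [← Set.mem_Iio, ← himage] at ha

end Values

section RealValue

variable {q : ℕ} [Fact (1 < q)] {t : ℕ}

lemma sum_div_pow_succ_eq {B : ℝ} (hB : B ≠ 0) (v : ℕ → ℝ) (m : ℕ) :
    ∑ i ∈ range m, v i / B ^ (i + 1) = (∑ i ∈ range m, v i * B ^ (m - 1 - i)) / B ^ m := by
  rw [sum_div]
  refine sum_congr rfl fun i hi => ?_
  have hm : B ^ m = B ^ (i + 1) * B ^ (m - 1 - i) := by
    rw [← pow_add]; congr 1; rw [mem_range] at hi; omega
  rw [hm, mul_div_mul_right _ _ (pow_ne_zero _ hB)]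

lemma pev_div_eq {g : (ZMod q)[X]} (hg : g.degree < t) :
    pev q g / q = basicValue t g / (q : ℝ) ^ t := by
  rcases eq_or_ne g 0 with rfl | hg0
  · simp [pev, basicValue]
  have hnat : g.natDegree < t := (natDegree_lt_iff_degree_lt hg0).2 hg
  have hpev : pev q g = ∑ j ∈ range t, ((g.coeff j).val : ℝ) / (q : ℝ) ^ j :=
    sum_subset (range_subset_range.2 hnat) fun j _ hj => by
      rw [coeff_eq_zero_of_natDegree_lt (by rw [mem_range] at hj; omega)]
      simp
  have hq : (q : ℝ) ≠ 0 := by have : 1 < q := Fact.out; positivity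
  simp_rw [hpev, sum_div, div_div, ← pow_succ]
  rw [sum_div_pow_succ_eq hq, basicValue]
  push_cast
  rfl

variable {p : (ZMod q)[X]} (hp : p.Monic) (hpt : p.natDegree = t) (ht : 0 < t)
include hp hpt ht

lemma rp_eq_sum (f : (ZMod q)[X]) {m : ℕ} (hm : f.natDegree < m) :
    rp q t p f = ∑ i ∈ range m, (basicValue t (baseDigit p f i) : ℝ) / ((q : ℝ) ^ t) ^ (i + 1) := by
  rw [rp, sum_div]
  refine sum_subset_zero_on_sdiff (range_subset_range.2 hm) (fun i hi => ?_) (fun i _ => ?_)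
  · rw [baseDigit_eq_zero hp]
    · simp [basicValue]
    simp only [mem_sdiff, mem_range] at hi
    rw [degree_eq_natDegree (hp.pow i).ne_zero, hp.natDegree_pow, hpt]
    exact (degree_le_natDegree).trans_lt (by exact_mod_cast (by nlinarith : f.natDegree < i * t))
  · rw [div_div, mul_comm, ← div_div, ← baseDigit, pev_div_eq (hpt ▸ degree_baseDigit_lt hp f i),
      div_div, ← pow_add, ← pow_mul]
    ring_nf

lemma floor_rp_mul_pow (f : (ZMod q)[X]) (k : ℕ) :
    ⌊rp q t p f * ((q : ℝ) ^ t) ^ k⌋₊ = prefixValue t p f k := by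
  have hQ : (0 : ℝ) < (q : ℝ) ^ t := by have : 1 < q := Fact.out; positivity
  set m := f.natDegree + 1
  set T := ∑ i ∈ range m, basicValue t (baseDigit p f (k + i)) * (q ^ t) ^ (m - 1 - i) with hT_def
  have hT : T < (q ^ t) ^ m := sum_mul_pow_sub_lt fun _ _ => basicValue_lt _
  have hsplit : rp q t p f * ((q : ℝ) ^ t) ^ k = prefixValue t p f k + T / ((q : ℝ) ^ t) ^ m := by
    rw [rp_eq_sum hp hpt ht f (by omega : f.natDegree < k + m), sum_range_add, add_mul,
      sum_div_pow_succ_eq hQ.ne', div_mul_cancel₀ _ (by positivity), sum_mul]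
    have hshift : ∀ (x : ℝ) (i : ℕ), x / ((q : ℝ) ^ t) ^ (k + i + 1) * ((q : ℝ) ^ t) ^ k =
        x / ((q : ℝ) ^ t) ^ (i + 1) := fun x i => by
      rw [show k + i + 1 = i + 1 + k by ring, pow_add, ← div_div,
        div_mul_cancel₀ _ (pow_ne_zero _ hQ.ne')]
    simp_rw [hshift]
    rw [sum_div_pow_succ_eq hQ.ne', prefixValue, hT_def]
    push_cast
    rfl
  rw [hsplit, Nat.floor_eq_iff (by positivity)]
  have hfrac : (T : ℝ) / ((q : ℝ) ^ t) ^ m < 1 :=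
    (div_lt_one (by positivity)).2 (by exact_mod_cast hT)
  exact ⟨le_add_of_nonneg_right (by positivity), by linarith⟩

lemma rp_mem_Ico_iff (f : (ZMod q)[X]) (k a : ℕ) :
    rp q t p f ∈ Set.Ico ((a : ℝ) / (q : ℝ) ^ (t * k)) (((a : ℝ) + 1) / (q : ℝ) ^ (t * k)) ↔
      prefixValue t p f k = a := by
  have hQ : (0 : ℝ) < (q : ℝ) ^ (t * k) := by have : 1 < q := Fact.out; positivity
  have hrp : 0 ≤ rp q t p f := by unfold rp pev; positivity
  rw [← floor_rp_mul_pow hp hpt ht, Nat.floor_eq_iff (by positivity), ← pow_mul, Set.mem_Ico,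
    div_le_iff₀ hQ, lt_div_iff₀ hQ]

lemma rp_mem_Ico_iff_modByMonic_eq {k : ℕ} {g : (ZMod q)[X]} (hg : g.degree < (p ^ k).degree)
    (f : (ZMod q)[X]) :
    rp q t p f ∈ Set.Ico ((prefixValue t p g k : ℝ) / (q : ℝ) ^ (t * k))
      (((prefixValue t p g k : ℝ) + 1) / (q : ℝ) ^ (t * k)) ↔ f %ₘ p ^ k = g := by
  rw [rp_mem_Ico_iff hp hpt ht, ← prefixValue_modByMonic_pow hp]
  exact ⟨eq_of_prefixValue_eq hp hpt (degree_modByMonic_lt _ (hp.pow k)) hg, fun h => by rw [h]⟩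

end RealValue

theorem stmt16_general (q d t : ℕ) [Fact q.Prime]
    (p : Fin d → Polynomial (ZMod q))
    (hmonic : ∀ i, (p i).Monic) (hirr : ∀ i, Irreducible (p i))
    (hdeg : ∀ i, (p i).natDegree = t) (hinj : Function.Injective p)
    (N : ℕ)
    (k a : Fin d → ℕ) (ha : ∀ i, a i + 1 ≤ q ^ (t * k i))
    (hs : t * ∑ i, k i ≤ N) :
    {f : Polynomial (ZMod q) | f.degree < ((N : ℕ) : WithBot ℕ) ∧
        rmap q t d p f ∈ canonicalBox q t d k a}.ncard
      = q ^ (N - t * ∑ i, k i) := by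
  choose g hg_deg hg using fun i => exists_prefixValue_eq (hmonic i) (hdeg i) (ha i)
  have hbox : ∀ f, rmap q t d p f ∈ canonicalBox q t d k a ↔ ∀ i, f %ₘ p i ^ k i = g i := by
    refine fun f => Set.mem_univ_pi.trans (forall_congr' fun i => ?_)
    rw [rmap, ← hg i]
    exact rp_mem_Ico_iff_modByMonic_eq (hmonic i) (hdeg i) (hdeg i ▸ (hirr i).natDegree_pos)
      (hg_deg i) f
  have hsum : ∑ i, (p i ^ k i).natDegree = t * ∑ i, k i := by
    simp_rw [(hmonic _).natDegree_pow, hdeg, mul_sum, mul_comm]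
  simp_rw [hbox]
  rw [ncard_setOf_degree_lt_forall_modByMonic_eq (fun i => (hmonic i).pow _)
    (pairwise_isCoprime_pow hmonic hirr hinj k) hg_deg (hsum ▸ hs), hsum, ZMod.card]

/-- for any `N` and any canonical box `B` of volume `q^(-s)` with
`s = t(k₁+⋯+k_d) ≤ N`, exactly `q^(N−s)` polynomials `f` of degree `< N` satisfy
`r(f) ∈ B`. -/
theorem stmt16 (q d t : ℕ) [Fact q.Prime] (hd : 2 ≤ d)
    (ht : t = ⌈2 * Real.log d / Real.log q + 2⌉₊)
    (p : Fin d → Polynomial (ZMod q))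
    (hmonic : ∀ i, (p i).Monic) (hirr : ∀ i, Irreducible (p i))
    (hdeg : ∀ i, (p i).natDegree = t) (hinj : Function.Injective p)
    (N : ℕ) (hN : 0 < N)
    (k a : Fin d → ℕ) (ha : ∀ i, a i + 1 ≤ q ^ (t * k i))
    (hs : t * ∑ i, k i ≤ N) :
    {f : Polynomial (ZMod q) | f.degree < ((N : ℕ) : WithBot ℕ) ∧
        rmap q t d p f ∈ canonicalBox q t d k a}.ncard
      = q ^ (N - t * ∑ i, k i) :=
  stmt16_general q d t p hmonic hirr hdeg hinj N k a ha hs
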